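/- Let R be a ring with identity and P a two-sided ideal. P is an almost prime ideal if and only if for all a, b ∈ R, aRb ⊆ P and aRb ⊄ P² implies a ∈ P or b ∈ P. -/

import Mathlib

variable {R : Type*}

/-- `P` is a right ideal of the (possibly nonunital, noncommutative) ring `R`. -/
def IsRightIdeal [NonUnitalRing R] (P : AddSubgroup R) : Prop :=
  ∀ a ∈ P, ∀ r : R, a * r ∈ P

/-- The product `AB` of two right ideals: the additive subgroup generated by products. -/
def idealMul [NonUnitalRing R] (A B : AddSubgroup R) : AddSubgroup R :=
  AddSubgroup.closure {x : R | ∃ a ∈ A, ∃ b ∈ B, x = a * b}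

/-- `P` is a two-sided ideal of `R`. -/
def IsTwoSidedIdealSub [NonUnitalRing R] (P : AddSubgroup R) : Prop :=
  ∀ a ∈ P, ∀ r : R, a * r ∈ P ∧ r * a ∈ P

/-- `P` is an almost prime (two-sided) ideal. -/
def IsAlmostPrimeTwoSided [NonUnitalRing R] (P : AddSubgroup R) : Prop :=
  IsTwoSidedIdealSub P ∧ P ≠ ⊤ ∧
    ∀ A B : AddSubgroup R, IsTwoSidedIdealSub A → IsTwoSidedIdealSub B →
      idealMul A B ≤ P → ¬ idealMul A B ≤ idealMul P P → A ≤ P ∨ B ≤ P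

/-! If `P` is almost prime and `aRb ⊆ P`, `aRb ⊄ P²`, apply the definition to the principal
ideals `RaR` and `RbR`, whose product is additively generated by elements of `R(aRb)R`.
Conversely, if `AB ⊆ P`, `AB ⊄ P²` but `A, B ⊄ P`, the hypothesis gives `ab ∈ P²` for all
`a ∈ A \ P`, `b ∈ B \ P`; and `A \ P` generates `A` additively (likewise for `B`), so `AB ⊆ P²`. -/

open scoped Pointwise

lemma mul_mem_idealMul [NonUnitalRing R] {A B : AddSubgroup R} {a b : R}
    (ha : a ∈ A) (hb : b ∈ B) : a * b ∈ idealMul A B :=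
  AddSubgroup.subset_closure ⟨a, ha, b, hb, rfl⟩

lemma idealMul_le [NonUnitalRing R] {A B P : AddSubgroup R}
    (h : ∀ a ∈ A, ∀ b ∈ B, a * b ∈ P) : idealMul A B ≤ P := by
  refine (AddSubgroup.closure_le _).2 ?_
  rintro x ⟨a, ha, b, hb, rfl⟩
  exact h a ha b hb

lemma idealMul_le_of_le_closure [NonUnitalRing R] {A B P : AddSubgroup R} {S T : Set R}
    (hA : A ≤ AddSubgroup.closure S) (hB : B ≤ AddSubgroup.closure T)
    (h : ∀ s ∈ S, ∀ t ∈ T, s * t ∈ P) : idealMul A B ≤ P := by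
  refine idealMul_le fun x hx y hy => ?_
  have hT (s : R) (hs : s ∈ S) : AddSubgroup.closure T ≤ P.comap (AddMonoidHom.mulLeft s) :=
    (AddSubgroup.closure_le _).2 fun t ht => h s hs t ht
  have hS : AddSubgroup.closure S ≤ P.comap (AddMonoidHom.mulRight y) :=
    (AddSubgroup.closure_le _).2 fun s hs => hT s hs (hB hy)
  exact hS (hA hx)

/-- For a fixed `a₀ ∈ A \ P`, any `a ∈ A ∩ P` is `(a + a₀) - a₀` with `a + a₀ ∈ A \ P`. -/
lemma AddSubgroup.le_of_sdiff_subset {G : Type*} [AddGroup G] {A P S : AddSubgroup G}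
    (hAP : ¬ A ≤ P) (h : (A : Set G) \ P ⊆ S) : A ≤ S := by
  obtain ⟨a₀, ha₀A, ha₀P⟩ := SetLike.not_le_iff_exists.1 hAP
  intro a ha
  by_cases haP : a ∈ P
  · have hshift : a + a₀ ∉ P := fun h' => ha₀P (by simpa using add_mem (neg_mem haP) h')
    simpa using sub_mem (h ⟨add_mem ha ha₀A, hshift⟩) (h ⟨ha₀A, ha₀P⟩)
  · exact h ⟨ha, haP⟩

lemma idealMul_le_of_forall_notMem [NonUnitalRing R] {A B P Q : AddSubgroup R}
    (hA : ¬ A ≤ P) (hB : ¬ B ≤ P) (h : ∀ a ∈ A, a ∉ P → ∀ b ∈ B, b ∉ P → a * b ∈ Q) :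
    idealMul A B ≤ Q := by
  have hright (b : R) (hb : b ∈ B) (hbP : b ∉ P) : A ≤ Q.comap (AddMonoidHom.mulRight b) :=
    AddSubgroup.le_of_sdiff_subset hA fun a ha => h a ha.1 ha.2 b hb hbP
  refine idealMul_le fun a ha => ?_
  exact AddSubgroup.le_of_sdiff_subset (S := Q.comap (AddMonoidHom.mulLeft a)) hB
    fun b hb => hright b hb.1 hb.2 ha

lemma TwoSidedIdeal.isTwoSidedIdealSub [Ring R] (I : TwoSidedIdeal R) :
    IsTwoSidedIdealSub I.asIdeal.toAddSubgroup := fun a ha r =>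
  ⟨by simpa using I.mul_mem_right a r (by simpa using ha),
    by simpa using I.mul_mem_left r a (by simpa using ha)⟩

lemma TwoSidedIdeal.asIdeal_toAddSubgroup_span [Ring R] (s : Set R) :
    (span s).asIdeal.toAddSubgroup = AddSubgroup.closure (Set.univ * s * Set.univ) :=
  AddSubgroup.ext fun _ => mem_asIdeal.trans mem_span_iff_mem_addSubgroup_closure

lemma IsAlmostPrimeTwoSided.mem_or_mem [Ring R] {P : AddSubgroup R}
    (hP : IsAlmostPrimeTwoSided P) {a b : R} (hPin : ∀ r : R, a * r * b ∈ P)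
    (hPnot : ¬ ∀ r : R, a * r * b ∈ idealMul P P) : a ∈ P ∨ b ∈ P := by
  obtain ⟨hPideal, -, hprime⟩ := hP
  set A := (TwoSidedIdeal.span {a}).asIdeal.toAddSubgroup
  set B := (TwoSidedIdeal.span {b}).asIdeal.toAddSubgroup
  have hAB : idealMul A B ≤ P := by
    refine idealMul_le_of_le_closure (TwoSidedIdeal.asIdeal_toAddSubgroup_span _).le
      (TwoSidedIdeal.asIdeal_toAddSubgroup_span _).le ?_
    rintro _ ⟨_, ⟨r, -, x, hx, rfl⟩, s, -, rfl⟩ _ ⟨_, ⟨r', -, y, hy, rfl⟩, s', -, rfl⟩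
    rw [Set.mem_singleton_iff] at hx hy
    subst x y
    have he : r * a * s * (r' * b * s') = r * (a * (s * r') * b) * s' := by noncomm_ring
    exact he ▸ (hPideal _ (hPideal _ (hPin (s * r')) r).2 s').1
  have haA : a ∈ A := TwoSidedIdeal.mem_asIdeal.2 (TwoSidedIdeal.subset_span rfl)
  have hbB : b ∈ B := TwoSidedIdeal.mem_asIdeal.2 (TwoSidedIdeal.subset_span rfl)
  have hABnot : ¬ idealMul A B ≤ idealMul P P := fun hle =>
    hPnot fun r => hle (mul_mem_idealMul ((TwoSidedIdeal.isTwoSidedIdealSub _ a haA r).1) hbB)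
  exact (hprime A B (TwoSidedIdeal.isTwoSidedIdealSub _) (TwoSidedIdeal.isTwoSidedIdealSub _)
    hAB hABnot).imp (· haA) (· hbB)

lemma isAlmostPrimeTwoSided_of_forall_mem_or_mem [Ring R] {P : AddSubgroup R}
    (hP : IsTwoSidedIdealSub P) (hproper : P ≠ ⊤)
    (h : ∀ a b : R, (∀ r : R, a * r * b ∈ P) → ¬ (∀ r : R, a * r * b ∈ idealMul P P) →
      a ∈ P ∨ b ∈ P) :
    IsAlmostPrimeTwoSided P := by
  refine ⟨hP, hproper, fun A B hA _ hAB hABnot => ?_⟩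
  by_contra! hnotle
  refine hABnot (idealMul_le_of_forall_notMem hnotle.1 hnotle.2 fun a ha haP b hb hbP => ?_)
  by_contra hab
  have haRb : ∀ r, a * r * b ∈ P := fun r => hAB (mul_mem_idealMul (hA a ha r).1 hb)
  exact (h a b haRb fun hall => hab (by simpa using hall 1)).elim haP hbP

/-- A two-sided ideal `P` of a ring with identity is almost prime iff
`aRb ⊆ P` and `aRb ⊄ P²` implies `a ∈ P` or `b ∈ P`. -/
theorem almostPrime_iff_aRb [Ring R] (P : AddSubgroup R)
    (hP : IsTwoSidedIdealSub P) (hproper : P ≠ ⊤) :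
    IsAlmostPrimeTwoSided P ↔
      ∀ a b : R, (∀ r : R, a * r * b ∈ P) →
        ¬ (∀ r : R, a * r * b ∈ idealMul P P) → a ∈ P ∨ b ∈ P :=
  ⟨fun h _ _ => h.mem_or_mem, isAlmostPrimeTwoSided_of_forall_mem_or_mem hP hproper⟩
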